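/- arXiv:0905.2556 — 2 statements merged into one kernel-verified Lean document; each statement's English description precedes it below -/
import Mathlib

section
/- Let P be a rank-1 orthogonal projector P = (f ⊗ f†)/(f† f) with f holomorphic and nonvanishing. Then [∂̄P, P] = −(f ⊗ (P₊f)†)/(f† f). -/
open Matrix Complex BigOperators

/-- Wirtinger derivative ∂ of a scalar function. -/
noncomputable def wd (g : ℂ → ℂ) (z : ℂ) : ℂ :=
  (fderiv ℝ g z 1 - Complex.I * fderiv ℝ g z Complex.I) / 2

/-- Wirtinger derivative ∂̄ of a scalar function. -/
noncomputable def wdbar (g : ℂ → ℂ) (z : ℂ) : ℂ :=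
  (fderiv ℝ g z 1 + Complex.I * fderiv ℝ g z Complex.I) / 2

/-- Componentwise ∂ of a vector-valued function. -/
noncomputable def wdv {N : ℕ} (f : ℂ → Fin N → ℂ) (z : ℂ) : Fin N → ℂ :=
  fun i => wd (fun w => f w i) z

/-- Componentwise ∂̄ of a vector-valued function. -/
noncomputable def wdbarv {N : ℕ} (f : ℂ → Fin N → ℂ) (z : ℂ) : Fin N → ℂ :=
  fun i => wdbar (fun w => f w i) z

/-- Entrywise ∂ of a matrix-valued function. -/
noncomputable def wdm {N : ℕ} (P : ℂ → Matrix (Fin N) (Fin N) ℂ) (z : ℂ) :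
    Matrix (Fin N) (Fin N) ℂ :=
  Matrix.of fun i j => wd (fun w => P w i j) z

/-- Entrywise ∂̄ of a matrix-valued function. -/
noncomputable def wdbarm {N : ℕ} (P : ℂ → Matrix (Fin N) (Fin N) ℂ) (z : ℂ) :
    Matrix (Fin N) (Fin N) ℂ :=
  Matrix.of fun i j => wdbar (fun w => P w i j) z

/-- The rank-1 projector P = (f ⊗ f†)/(f† f). -/
noncomputable def proj {N : ℕ} (f : Fin N → ℂ) : Matrix (Fin N) (Fin N) ℂ :=
  (star f ⬝ᵥ f)⁻¹ • Matrix.vecMulVec f (star f)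

/-- P₊(f, g) = g − f (f† g)/(f† f). -/
noncomputable def Pplus {N : ℕ} (f g : Fin N → ℂ) : Fin N → ℂ :=
  g - ((star f ⬝ᵥ g) / (star f ⬝ᵥ f)) • f

/-- fⱼ = P₊ʲ f, built from a map f : ℂ → ℂᴺ using the Wirtinger ∂. -/
noncomputable def Fseq {N : ℕ} (f : ℂ → Fin N → ℂ) : ℕ → ℂ → Fin N → ℂ
  | 0 => f
  | (j + 1) => fun z => Pplus (Fseq f j z) (wdv (Fseq f j) z)

/-! With `s = f† f` and `g = P₊ f`, holomorphy gives `∂̄ f = 0` and `∂̄ f† = (∂f)†`, so the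
quotient rule yields `∂̄P = (f ⊗ g†) / s`. As `g ⟂ f`, `(∂̄P) P = 0`, while `P (∂̄P) = ∂̄P`
because `P` fixes `f`; hence `[∂̄P, P] = -∂̄P`. -/

section Wirtinger

variable {g h : ℂ → ℂ} {z : ℂ}

lemma HasFDerivAt.wdbar_eq {L : ℂ →L[ℝ] ℂ} (hg : HasFDerivAt g L z) :
    wdbar g z = (L 1 + I * L I) / 2 := by
  rw [wdbar, hg.fderiv]

lemma HasFDerivAt.wd_eq {L : ℂ →L[ℝ] ℂ} (hg : HasFDerivAt g L z) :
    wd g z = (L 1 - I * L I) / 2 := by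
  rw [wd, hg.fderiv]

lemma DifferentiableAt.wdbar_eq_zero (hg : DifferentiableAt ℂ g z) : wdbar g z = 0 := by
  rw [(hg.hasFDerivAt.restrictScalars ℝ).wdbar_eq]
  simp [← mul_assoc]

lemma DifferentiableAt.wdbar_star (hg : DifferentiableAt ℂ g z) :
    wdbar (fun w => star (g w)) z = star (wd g z) := by
  have hg' := hg.hasFDerivAt.restrictScalars ℝ
  rw [hg'.star.wdbar_eq, hg'.wd_eq]
  simp only [ContinuousLinearMap.comp_apply, ContinuousLinearMap.coe_restrictScalars',
    fderiv_eq_smul_deriv, smul_eq_mul, ContinuousLinearEquiv.coe_coe, starL'_apply, star_div₀,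
    star_sub, star_mul', RCLike.star_def, conj_I, star_ofNat]
  ring

lemma wdbar_mul (hg : DifferentiableAt ℝ g z) (hh : DifferentiableAt ℝ h z) :
    wdbar (fun w => g w * h w) z = wdbar g z * h z + g z * wdbar h z := by
  rw [(hg.hasFDerivAt.fun_mul hh.hasFDerivAt).wdbar_eq, wdbar, wdbar]
  simp only [_root_.add_apply, _root_.smul_apply, smul_eq_mul]
  ring

lemma wdbar_inv (hg : DifferentiableAt ℝ g z) (hz : g z ≠ 0) :
    wdbar (fun w => (g w)⁻¹) z = -wdbar g z / g z ^ 2 := by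
  rw [HasFDerivAt.wdbar_eq (g := fun w => (g w)⁻¹)
    ((hasFDerivAt_inv' hz).comp z hg.hasFDerivAt), wdbar]
  simp only [ContinuousLinearMap.coe_comp, Function.comp_apply,
    _root_.neg_apply, ContinuousLinearMap.mulLeftRight_apply]
  field_simp
  ring

lemma wdbar_sum {ι : Type*} (s : Finset ι) {g : ι → ℂ → ℂ}
    (hg : ∀ i ∈ s, DifferentiableAt ℝ (g i) z) :
    wdbar (fun w => ∑ i ∈ s, g i w) z = ∑ i ∈ s, wdbar (g i) z := by
  rw [(HasFDerivAt.fun_sum fun i hi => (hg i hi).hasFDerivAt).wdbar_eq]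
  simp only [_root_.sum_apply, wdbar, Finset.mul_sum, ← Finset.sum_add_distrib,
    Finset.sum_div]

lemma wdbar_mul_star (hg : DifferentiableAt ℂ g z) (hh : DifferentiableAt ℂ h z) :
    wdbar (fun w => g w * star (h w)) z = g z * star (wd h z) := by
  rw [wdbar_mul (hg.restrictScalars ℝ) (hh.restrictScalars ℝ).star, hg.wdbar_eq_zero,
    hh.wdbar_star, zero_mul, zero_add]

end Wirtinger

section Projector

variable {N : ℕ} (v w : Fin N → ℂ)

open ComplexOrder in
lemma star_dotProduct_self_ne_zero {v : Fin N → ℂ} (hv : v ≠ 0) : star v ⬝ᵥ v ≠ 0 :=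
  dotProduct_star_self_eq_zero.not.mpr hv

lemma star_Pplus :
    star (Pplus v w) = star w - ((star w ⬝ᵥ v) / (star v ⬝ᵥ v)) • star v := by
  rw [Pplus, star_sub, star_smul, star_div₀, star_dotProduct, star_star, ← star_dotProduct]

lemma star_dotProduct_Pplus (hv : star v ⬝ᵥ v ≠ 0) : star v ⬝ᵥ Pplus v w = 0 := by
  rw [Pplus, dotProduct_sub, dotProduct_smul, smul_eq_mul, div_mul_cancel₀ _ hv, sub_self]

lemma star_Pplus_dotProduct (hv : star v ⬝ᵥ v ≠ 0) : star (Pplus v w) ⬝ᵥ v = 0 := by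
  rw [star_dotProduct, star_dotProduct_Pplus v w hv, star_zero]

lemma proj_mul_vecMulVec (u : Fin N → ℂ) (hv : star v ⬝ᵥ v ≠ 0) :
    proj v * vecMulVec v u = vecMulVec v u := by
  rw [proj, smul_mul_assoc, vecMulVec_mul_vecMulVec, ← vecMulVec_smul, smul_smul,
    inv_mul_cancel₀ hv, one_smul]

lemma vecMulVec_star_Pplus_mul_proj (hv : star v ⬝ᵥ v ≠ 0) :
    vecMulVec v (star (Pplus v w)) * proj v = 0 := by
  rw [proj, mul_smul_comm, vecMulVec_mul_vecMulVec, star_Pplus_dotProduct v w hv, zero_smul,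
    vecMulVec_zero, smul_zero]

theorem commutator_proj_of_vecMulVec_star_Pplus (c : ℂ) (hv : star v ⬝ᵥ v ≠ 0) :
    c • vecMulVec v (star (Pplus v w)) * proj v - proj v * c • vecMulVec v (star (Pplus v w)) =
      -(c • vecMulVec v (star (Pplus v w))) := by
  rw [smul_mul_assoc, vecMulVec_star_Pplus_mul_proj v w hv, smul_zero, mul_smul_comm,
    proj_mul_vecMulVec v _ hv, zero_sub]

end Projector

section ProjDeriv

variable {N : ℕ} {f : ℂ → Fin N → ℂ} {ξ : ℂ}

lemma wdbar_star_dotProduct_self (hf : ∀ i, DifferentiableAt ℂ (fun w => f w i) ξ) :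
    wdbar (fun w => star (f w) ⬝ᵥ f w) ξ = star (wdv f ξ) ⬝ᵥ f ξ := by
  simp only [dotProduct, Pi.star_apply, mul_comm (star (f _ _))]
  rw [wdbar_sum (g := fun k w => f w k * star (f w k)) _
    fun k _ => ((hf k).restrictScalars ℝ).mul ((hf k).restrictScalars ℝ).star]
  exact Finset.sum_congr rfl fun k _ => (wdbar_mul_star (hf k) (hf k)).trans (mul_comm _ _)

theorem wdbarm_proj (hf : ∀ i, DifferentiableAt ℂ (fun w => f w i) ξ) (hξ : f ξ ≠ 0) :
    wdbarm (fun z => proj (f z)) ξ =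
      (star (f ξ) ⬝ᵥ f ξ)⁻¹ • vecMulVec (f ξ) (star (Pplus (f ξ) (wdv f ξ))) := by
  have hfR i := (hf i).restrictScalars ℝ
  have hSR : DifferentiableAt ℝ (fun w => star (f w) ⬝ᵥ f w) ξ :=
    DifferentiableAt.fun_sum fun k _ => (hfR k).star.mul (hfR k)
  have hSξ := star_dotProduct_self_ne_zero hξ
  ext i j
  have hentry : (fun w => proj (f w) i j) =
      fun w => (star (f w) ⬝ᵥ f w)⁻¹ * (f w i * star (f w j)) := by
    ext w
    simp [proj, vecMulVec_apply]
  simp only [wdbarm, of_apply, hentry]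
  rw [wdbar_mul (hSR.fun_inv hSξ) ((hfR i).fun_mul (hfR j).star), wdbar_inv hSR hSξ,
    wdbar_star_dotProduct_self hf, wdbar_mul_star (hf i) (hf j),
    show wd (fun w => f w j) ξ = wdv f ξ j from rfl]
  simp only [Matrix.smul_apply, vecMulVec_apply, star_Pplus, Pi.sub_apply, Pi.smul_apply,
    Pi.star_apply, smul_eq_mul]
  field_simp
  ring

end ProjDeriv

/-- for holomorphic nonvanishing f, [∂̄P, P] = −(f ⊗ (P₊f)†)/(f† f). -/
theorem stmt_3 {N : ℕ} (f : ℂ → Fin N → ℂ)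
    (hhol : ∀ i, Differentiable ℂ (fun z => f z i))
    (hnv : ∀ z, f z ≠ 0) (ξ : ℂ) :
    wdbarm (fun z => proj (f z)) ξ * proj (f ξ) - proj (f ξ) * wdbarm (fun z => proj (f z)) ξ =
      -((star (f ξ) ⬝ᵥ f ξ)⁻¹ •
        Matrix.vecMulVec (f ξ) (star (Pplus (f ξ) (wdv f ξ)))) := by
  rw [wdbarm_proj (fun i => hhol i ξ) (hnv ξ)]
  exact commutator_proj_of_vecMulVec_star_Pplus _ _ _ (star_dotProduct_self_ne_zero (hnv ξ))
end

section
/- Let P₀, …, P_k be mutually orthogonal projectors (Pᵢ² = Pᵢ, PᵢPⱼ = 0 for i≠j) on ℂ^N and λ ∈ ℂ with λ ≠ ±1. Define φ_k = I + (4λ/(1−λ)²) ∑_{j=0}^{k−1} Pⱼ − (2/(1−λ)) P_k. Then φ_k is invertible with inverse φ_k⁻¹ = I − (4λ/(1+λ)²) ∑_{j=0}^{k−1} Pⱼ − (2/(1+λ)) P_k. -/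
open Matrix Complex BigOperators

private lemma stmt8_aux {N : ℕ} (Q R : Matrix (Fin N) (Fin N) ℂ)
    (hQ : Q * Q = Q) (hR : R * R = R) (hQR : Q * R = 0) (hRQ : R * Q = 0)
    (a b c d : ℂ) (ha : a - c - a * c = 0) (hb : b * d - b - d = 0) :
    ((1 : Matrix (Fin N) (Fin N) ℂ) + a • Q - b • R) * (1 - c • Q - d • R) = 1 := by
  simp only [mul_sub, sub_mul, add_mul, mul_add, one_mul, mul_one, smul_mul_assoc,
    mul_smul_comm, hQ, hR, hQR, hRQ, smul_smul, smul_zero, sub_zero]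
  match_scalars <;>
    first
      | ring1
      | linear_combination ha
      | linear_combination -ha
      | linear_combination hb

/-- φ_k = I + (4λ/(1−λ)²) ∑_{j<k} Pⱼ − (2/(1−λ)) P_k is invertible with
inverse I − (4λ/(1+λ)²) ∑_{j<k} Pⱼ − (2/(1+λ)) P_k. -/
theorem stmt_8 {N k : ℕ} (P : Fin (k + 1) → Matrix (Fin N) (Fin N) ℂ)
    (hP : ∀ i j, P i * P j = if i = j then P i else 0)
    (lam : ℂ) (h1 : lam ≠ 1) (h2 : lam ≠ -1) :
    ((1 : Matrix (Fin N) (Fin N) ℂ) +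
          (4 * lam / (1 - lam) ^ 2) • ∑ j : Fin k, P j.castSucc -
          (2 / (1 - lam)) • P (Fin.last k)) *
        ((1 : Matrix (Fin N) (Fin N) ℂ) -
          (4 * lam / (1 + lam) ^ 2) • ∑ j : Fin k, P j.castSucc -
          (2 / (1 + lam)) • P (Fin.last k)) = 1 ∧
    ((1 : Matrix (Fin N) (Fin N) ℂ) -
          (4 * lam / (1 + lam) ^ 2) • ∑ j : Fin k, P j.castSucc -
          (2 / (1 + lam)) • P (Fin.last k)) *
        ((1 : Matrix (Fin N) (Fin N) ℂ) +
          (4 * lam / (1 - lam) ^ 2) • ∑ j : Fin k, P j.castSucc -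
          (2 / (1 - lam)) • P (Fin.last k)) = 1 := by
  set Q := ∑ j : Fin k, P j.castSucc with hQdef
  set R := P (Fin.last k) with hRdef
  have hQQ : Q * Q = Q := by
    rw [hQdef, Finset.sum_mul_sum]
    rw [Finset.sum_congr rfl (fun i _ => Finset.sum_congr rfl (fun j _ => hP _ _))]
    simp [Fin.castSucc_inj]
  have hRR : R * R = R := by simp [hRdef, hP]
  have hQR : Q * R = 0 := by
    rw [hQdef, Finset.sum_mul]
    refine Finset.sum_eq_zero fun i _ => ?_
    rw [hP]; simp [Fin.castSucc_lt_last i |>.ne]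
  have hRQ : R * Q = 0 := by
    rw [hQdef, Finset.mul_sum]
    refine Finset.sum_eq_zero fun i _ => ?_
    rw [hP]; simp [(Fin.castSucc_lt_last i).ne']
  have hm : (1 : ℂ) - lam ≠ 0 := sub_ne_zero.mpr (Ne.symm h1)
  have hp : (1 : ℂ) + lam ≠ 0 := by
    intro h; apply h2; linear_combination h
  constructor
  · exact stmt8_aux Q R hQQ hRR hQR hRQ _ _ _ _ (by field_simp; ring) (by field_simp; ring)
  · have := stmt8_aux Q R hQQ hRR hQR hRQ (-(4 * lam / (1 + lam) ^ 2)) (2 / (1 + lam))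
      (-(4 * lam / (1 - lam) ^ 2)) (2 / (1 - lam)) (by field_simp; ring) (by field_simp; ring)
    simpa [sub_eq_add_neg, neg_smul, add_comm, add_left_comm, add_assoc] using this
end
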